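/- Suppose a_1 G_1 + ... + a_m G_m = 0 in Eil_2(n), where each coefficient a_j ∈ R is nonzero and each G_j ∈ 𝒪𝒢_n is a tree on X (connected with acyclic underlying undirected graph). Then the element a_1 G_1 + ... + a_m G_m of Γ_n lies in the submodule generated by symmetry combinations, Jacobi combinations, and mixed Jacobi combinations alone (no disconnected graphs or graphs with multiple edges are needed). -/

import Mathlib

/-
Formalization of definitions and a statement from:
"Combinatorial bases for multilinear parts of free algebras with double compatible brackets"
(Fu Liu).  The alphabet X = {x_1 < ... < x_n} is identified with Fin n.
-/

noncomputable section
namespace LiuPaper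

attribute [local instance] Classical.propDecidable

/-- The two colors used throughout: red and blue. -/
inductive Col : Type
  | red | blue
  deriving DecidableEq

/-! ### Two-colored graphs on `Fin n` -/

/-- A two-colored graph on the vertex set `Fin n`: each unordered pair of vertices either
carries no edge (`none`) or an edge colored red or blue. -/
abbrev TCGraph (n : ℕ) : Type := Sym2 (Fin n) → Option Col

/-- No loops: the diagonal pairs carry no edge. -/
def Loopless {n : ℕ} (G : TCGraph n) : Prop := ∀ v : Fin n, G (Sym2.diag v) = none

/-- The underlying (uncolored) simple graph of a two-colored graph. -/
def toSG {n : ℕ} (G : TCGraph n) : SimpleGraph (Fin n) where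
  Adj i j := i ≠ j ∧ G s(i, j) ≠ none
  symm := ⟨by
    intro i j hij
    refine ⟨hij.1.symm, ?_⟩
    rw [Sym2.eq_swap]
    exact hij.2⟩
  loopless := ⟨fun v hv => hv.1 rfl⟩

/-- Pattern `1r3r2`: there are `i < j < k` with `{i,k}` and `{j,k}` both red. -/
def Pat1r3r2 {n : ℕ} (G : TCGraph n) : Prop :=
  ∃ i j k : Fin n, i < j ∧ j < k ∧ G s(i, k) = some Col.red ∧ G s(j, k) = some Col.red

/-- Pattern `2b1b3`: there are `i < j < k` with `{i,j}` and `{i,k}` both blue. -/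
def Pat2b1b3 {n : ℕ} (G : TCGraph n) : Prop :=
  ∃ i j k : Fin n, i < j ∧ j < k ∧ G s(i, j) = some Col.blue ∧ G s(i, k) = some Col.blue

/-- Pattern `1r2b3`: there are `i < j < k` with `{i,j}` red and `{j,k}` blue. -/
def Pat1r2b3 {n : ℕ} (G : TCGraph n) : Prop :=
  ∃ i j k : Fin n, i < j ∧ j < k ∧ G s(i, j) = some Col.red ∧ G s(j, k) = some Col.blue

/-- `𝒢̄_n`: the set of two-colored trees on `X` avoiding the patterns
`1r3r2`, `2b1b3` and `1r2b3`. -/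
def Gbar (n : ℕ) : Set (TCGraph n) :=
  {G | Loopless G ∧ (toSG G).IsTree ∧ ¬Pat1r3r2 G ∧ ¬Pat2b1b3 G ∧ ¬Pat1r2b3 G}

/-! ### Rooted trees on `Fin n` -/

/-- A rooted tree on `X = Fin n`: a tree together with a distinguished root. -/
structure RootedTree (n : ℕ) where
  graph : SimpleGraph (Fin n)
  isTree : graph.IsTree
  root : Fin n

/-- `i` is the parent of `j` in the rooted tree `T`:
they are adjacent and `i` is closer to the root. -/
def ParentOf {n : ℕ} (T : RootedTree n) (i j : Fin n) : Prop :=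
  T.graph.Adj i j ∧ T.graph.dist T.root i + 1 = T.graph.dist T.root j

/-- The color map `c`: color the increasing edges (parent < child) of a rooted tree red and
the decreasing edges blue. -/
def colorMap {n : ℕ} (T : RootedTree n) : TCGraph n :=
  Sym2.lift ⟨fun i j =>
    if T.graph.Adj i j then
      (if (ParentOf T i j ∧ i < j) ∨ (ParentOf T j i ∧ j < i) then some Col.red
       else some Col.blue)
    else none,
    by
      intro i j
      dsimp only
      by_cases h : T.graph.Adj i j
      · rw [if_pos h, if_pos h.symm]
        by_cases h2 : (ParentOf T i j ∧ i < j) ∨ (ParentOf T j i ∧ j < i)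
        · rw [if_pos h2, if_pos (Or.symm h2)]
        · rw [if_neg h2, if_neg (fun h2' => h2 (Or.symm h2'))]
      · rw [if_neg h, if_neg (fun h' => h (h'.symm))]⟩

/-- The number of increasing edges (counted as ordered pairs (parent, child) with
parent < child) of a rooted tree. -/
def incCount {n : ℕ} (T : RootedTree n) : ℕ :=
  (Finset.univ.filter (fun p : Fin n × Fin n => ParentOf T p.1 p.2 ∧ p.1 < p.2)).card

/-- `a(n,i)`: the number of rooted trees on `{1, …, n}` with exactly `i` increasing edges. -/
def numRT (n i : ℕ) : ℕ := Nat.card {T : RootedTree n // incCount T = i}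

variable (R : Type*) [CommRing R]

/-! ### Oriented two-colored graphs, `Γ_n`, `I_n` and `Eil₂(n)` -/

/-- An oriented two-colored graph on `Fin n`: each ordered pair of distinct vertices either
carries no edge or a directed edge colored red or blue. -/
structure OGraph (n : ℕ) where
  dir : Fin n → Fin n → Option Col
  loopless : ∀ v : Fin n, dir v v = none

/-- The underlying undirected simple graph of an oriented two-colored graph. -/
def toSGO {n : ℕ} (G : OGraph n) : SimpleGraph (Fin n) where
  Adj i j := i ≠ j ∧ (G.dir i j ≠ none ∨ G.dir j i ≠ none)
  symm := ⟨by rintro i j ⟨h1, h2⟩; exact ⟨h1.symm, h2.symm⟩⟩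
  loopless := ⟨fun v hv => hv.1 rfl⟩

/-- The graph has at most one edge between any two vertices. -/
def NoMulti {n : ℕ} (G : OGraph n) : Prop := ∀ i j : Fin n, G.dir i j = none ∨ G.dir j i = none

/-- An oriented two-colored graph is a tree on `X` when it is connected and its underlying
undirected (multi)graph is acyclic. -/
def IsOTree {n : ℕ} (G : OGraph n) : Prop := (toSGO G).IsTree ∧ NoMulti G

/-- `Γ_n`: the free `R`-module on the oriented two-colored graphs. -/
abbrev Gamma (n : ℕ) : Type _ := OGraph n →₀ R

/-- Generators of `I_n`: disconnected graphs. -/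
def disconnSet (n : ℕ) : Set (Gamma R n) :=
  {x | ∃ G : OGraph n, ¬(toSGO G).Connected ∧ x = Finsupp.single G 1}

/-- Generators of `I_n`: graphs with more than one edge between some pair of vertices. -/
def multiSet (n : ℕ) : Set (Gamma R n) :=
  {x | ∃ G : OGraph n, (∃ i j : Fin n, G.dir i j ≠ none ∧ G.dir j i ≠ none) ∧
    x = Finsupp.single G 1}

/-- Symmetry combinations in `Γ_n`: `G₁ + G₂` where `G₂` reverses one edge of `G₁`. -/
def symOSet (n : ℕ) : Set (Gamma R n) :=
  {x | ∃ (G₁ G₂ : OGraph n) (i j : Fin n) (c : Col),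
    G₁.dir i j = some c ∧ G₁.dir j i = none ∧
    G₂.dir i j = none ∧ G₂.dir j i = some c ∧
    (∀ p q : Fin n, ¬((p = i ∧ q = j) ∨ (p = j ∧ q = i)) → G₂.dir p q = G₁.dir p q) ∧
    x = Finsupp.single G₁ 1 + Finsupp.single G₂ 1}

/-- `Tri G i j k c₁ c₂`: within the triangle `{i,j,k}`, `G` has exactly the two edges
`i → j` (colored `c₁`) and `j → k` (colored `c₂`). -/
def Tri {n : ℕ} (G : OGraph n) (i j k : Fin n) (c₁ c₂ : Col) : Prop :=
  G.dir i j = some c₁ ∧ G.dir j k = some c₂ ∧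
  G.dir j i = none ∧ G.dir k j = none ∧ G.dir i k = none ∧ G.dir k i = none

/-- `(p,q)` is an ordered pair not supported on the unordered pairs
`{i,j}`, `{j,k}`, `{k,i}`. -/
def OffTri {n : ℕ} (i j k p q : Fin n) : Prop :=
  ¬((p = i ∧ q = j) ∨ (p = j ∧ q = i) ∨ (p = j ∧ q = k) ∨ (p = k ∧ q = j) ∨
    (p = k ∧ q = i) ∨ (p = i ∧ q = k))

/-- Jacobi combinations in `Γ_n`: `G₁ + G₂ + G₃` agreeing outside a two-edge same-colored
subgraph `{i→j, j→k}` whose subgraphs in `G₂`, `G₃` are the cyclic rotations of `i,j,k`. -/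
def jacOSet (n : ℕ) : Set (Gamma R n) :=
  {x | ∃ (G₁ G₂ G₃ : OGraph n) (i j k : Fin n) (c : Col),
    i ≠ j ∧ j ≠ k ∧ i ≠ k ∧
    Tri G₁ i j k c c ∧ Tri G₂ j k i c c ∧ Tri G₃ k i j c c ∧
    (∀ p q : Fin n, OffTri i j k p q →
      G₂.dir p q = G₁.dir p q ∧ G₃.dir p q = G₁.dir p q) ∧
    x = Finsupp.single G₁ 1 + Finsupp.single G₂ 1 + Finsupp.single G₃ 1}

/-- Mixed Jacobi combinations in `Γ_n`: obtained from two copies of a red Jacobi combination by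
recoloring from red to blue one edge of the two-edge subgraph in the first copy and the other
edge in the second copy. -/
def mixOSet (n : ℕ) : Set (Gamma R n) :=
  {x | ∃ (G₁ G₂ G₃ G₄ G₅ G₆ : OGraph n) (i j k : Fin n),
    i ≠ j ∧ j ≠ k ∧ i ≠ k ∧
    Tri G₁ i j k Col.red Col.blue ∧ Tri G₂ j k i Col.red Col.blue ∧
    Tri G₃ k i j Col.red Col.blue ∧
    Tri G₄ i j k Col.blue Col.red ∧ Tri G₅ j k i Col.blue Col.red ∧
    Tri G₆ k i j Col.blue Col.red ∧
    (∀ p q : Fin n, OffTri i j k p q →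
      G₂.dir p q = G₁.dir p q ∧ G₃.dir p q = G₁.dir p q ∧ G₄.dir p q = G₁.dir p q ∧
      G₅.dir p q = G₁.dir p q ∧ G₆.dir p q = G₁.dir p q) ∧
    x = Finsupp.single G₁ 1 + Finsupp.single G₂ 1 + Finsupp.single G₃ 1 +
        Finsupp.single G₄ 1 + Finsupp.single G₅ 1 + Finsupp.single G₆ 1}

/-- `I_n ⊆ Γ_n`: the submodule generated by disconnected graphs, graphs with multiple edges,
symmetry combinations, Jacobi combinations and mixed Jacobi combinations. -/
def In (n : ℕ) : Submodule R (Gamma R n) :=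
  Submodule.span R (disconnSet R n ∪ multiSet R n ∪ symOSet R n ∪ jacOSet R n ∪ mixOSet R n)

/-- `Eil₂(n) = Γ_n / I_n`. -/
abbrev Eil2 (n : ℕ) : Type _ := Gamma R n ⧸ In R n

/-- The consistent orientation `o_G` of a two-colored graph: a red edge `{i,j}` with `i<j`
is oriented `i → j`, a blue one `j → i`. -/
def orient {n : ℕ} (G : TCGraph n) : OGraph n where
  dir i j :=
    if i < j then (if G s(i, j) = some Col.red then some Col.red else none)
    else if j < i then (if G s(i, j) = some Col.blue then some Col.blue else none)
    else none
  loopless := by intro v; simp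

/-! Project `Γ_n` onto the span of the connected graphs without multiple edges. The projection
kills the disconnected and multiple-edge generators of `I_n`. The graphs of a symmetry, Jacobi
or mixed Jacobi combination agree outside a set of two or three vertices, and each of them
links that set by single edges, so either all or none of them are connected without multiple
edges; such a combination is therefore mapped to itself or to `0`. Hence the projection maps
`I_n` into the span of these three kinds of combinations, and it fixes every combination of
trees. -/

section FilterSpan

variable {S α M : Type*} [Semiring S] [AddCommMonoid M] [Module S M]
  {P : α → Prop} [DecidablePred P]

theorem filter_mem_of_forall_mem_support_iff {N : Submodule S (α →₀ M)} {f : α →₀ M}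
    (hf : f ∈ N) (h : ∃ Q : Prop, ∀ a ∈ f.support, P a ↔ Q) : f.filter P ∈ N := by
  obtain ⟨Q, hQ⟩ := h
  by_cases hq : Q
  · rwa [(Finsupp.filter_eq_self_iff P f).2 fun a ha =>
      (hQ a (Finsupp.mem_support_iff.2 ha)).2 hq]
  · rw [(Finsupp.filter_eq_zero_iff P f).2 fun a hPa =>
      Finsupp.notMem_support_iff.1 fun ha => hq ((hQ a ha).1 hPa)]
    exact N.zero_mem

theorem filter_mem_span_of_mem_span {s t : Set (α →₀ M)} {f : α →₀ M}
    (hf : f ∈ Submodule.span S s) (hs : ∀ g ∈ s, g.filter P ∈ Submodule.span S t) :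
    f.filter P ∈ Submodule.span S t := by
  induction hf using Submodule.span_induction with
  | mem g hg => exact hs g hg
  | zero => rw [Finsupp.filter_zero]; exact zero_mem _
  | add g g' _ _ hg hg' => rw [Finsupp.filter_add]; exact add_mem hg hg'
  | smul c g _ hg => rw [Finsupp.filter_smul]; exact Submodule.smul_mem _ c hg

theorem forall_mem_support_add {p : α → Prop} {f g : α →₀ M}
    (hf : ∀ a ∈ f.support, p a) (hg : ∀ a ∈ g.support, p a) : ∀ a ∈ (f + g).support, p a :=
  fun a ha => (Finset.mem_union.1 (Finsupp.support_add ha)).elim (hf a) (hg a)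

theorem forall_mem_support_single {p : α → Prop} {a : α} (b : M) (h : p a) :
    ∀ x ∈ (Finsupp.single a b).support, p x :=
  fun _ hx => Finset.mem_singleton.1 (Finsupp.support_single_subset hx) ▸ h

end FilterSpan

theorem connected_of_adj_le_reachable {V : Type*} {G H : SimpleGraph V} (hG : G.Connected)
    (h : ∀ u v, G.Adj u v → H.Reachable u v) : H.Connected := by
  have := hG.nonempty
  refine ⟨fun u v => ?_⟩
  obtain ⟨w⟩ := hG.preconnected u v
  induction w with
  | nil => rfl
  | cons ha _ ih => exact (h _ _ ha).trans ih

section Graphs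

variable {n : ℕ}

def ConnectedNoMulti (G : OGraph n) : Prop := (toSGO G).Connected ∧ NoMulti G

def ConnectedNoMultiOn (G : OGraph n) (S : Set (Fin n)) : Prop :=
  (∀ a ∈ S, ∀ b ∈ S, (toSGO G).Reachable a b) ∧
    ∀ p ∈ S, ∀ q ∈ S, G.dir p q = none ∨ G.dir q p = none

theorem ConnectedNoMulti.of_agree_off {G G' : OGraph n} {S : Set (Fin n)}
    (hG : ConnectedNoMulti G) (hG' : ConnectedNoMultiOn G' S)
    (hagree : ∀ p q, p ∉ S ∨ q ∉ S → G'.dir p q = G.dir p q) : ConnectedNoMulti G' := by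
  refine ⟨connected_of_adj_le_reachable hG.1 fun a b hab => ?_, fun p q => ?_⟩
  · by_cases hS : a ∈ S ∧ b ∈ S
    · exact hG'.1 a hS.1 b hS.2
    · rw [not_and_or] at hS
      refine SimpleGraph.Adj.reachable ⟨hab.1, ?_⟩
      rw [hagree a b hS, hagree b a hS.symm]
      exact hab.2
  · by_cases hS : p ∈ S ∧ q ∈ S
    · exact hG'.2 p hS.1 q hS.2
    · rw [not_and_or] at hS
      rw [hagree p q hS, hagree q p hS.symm]
      exact hG.2 p q

theorem connectedNoMulti_iff_of_agree_off {G G' : OGraph n} {S : Set (Fin n)}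
    (hG : ConnectedNoMultiOn G S) (hG' : ConnectedNoMultiOn G' S)
    (hagree : ∀ p q, p ∉ S ∨ q ∉ S → G'.dir p q = G.dir p q) :
    ConnectedNoMulti G' ↔ ConnectedNoMulti G :=
  ⟨fun h => h.of_agree_off hG fun p q hpq => (hagree p q hpq).symm,
    fun h => h.of_agree_off hG' hagree⟩

theorem adj_of_dir_eq_some {G : OGraph n} {p q : Fin n} {c : Col} (h : G.dir p q = some c) :
    (toSGO G).Adj p q :=
  ⟨fun hpq => (by rw [hpq, G.loopless] at h; cases h), Or.inl (by simp [h])⟩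

theorem connectedNoMultiOn_pair {G : OGraph n} {i j : Fin n} {c : Col}
    (hij : G.dir i j = some c) (hji : G.dir j i = none) : ConnectedNoMultiOn G {i, j} := by
  refine ⟨?_, ?_⟩
  · rintro a (rfl | rfl) b (rfl | rfl)
    exacts [.rfl, (adj_of_dir_eq_some hij).reachable, (adj_of_dir_eq_some hij).reachable.symm,
      .rfl]
  · rintro p (rfl | rfl) q (rfl | rfl) <;> simp [G.loopless, hji]

theorem Tri.connectedNoMultiOn {G : OGraph n} {x y z : Fin n} {c₁ c₂ : Col}
    (hT : Tri G x y z c₁ c₂) : ConnectedNoMultiOn G {x, y, z} := by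
  obtain ⟨hxy, hyz, hyx, hzy, hxz, hzx⟩ := hT
  have hy : ∀ v ∈ ({x, y, z} : Set (Fin n)), (toSGO G).Reachable y v := by
    rintro v (rfl | rfl | rfl)
    exacts [(adj_of_dir_eq_some hxy).reachable.symm, .rfl, (adj_of_dir_eq_some hyz).reachable]
  refine ⟨fun a ha b hb => (hy a ha).symm.trans (hy b hb), ?_⟩
  rintro p (rfl | rfl | rfl) q (rfl | rfl | rfl) <;> simp [G.loopless, *]

theorem offTri_of_not_mem {i j k p q : Fin n}
    (h : p ∉ ({i, j, k} : Set (Fin n)) ∨ q ∉ ({i, j, k} : Set (Fin n))) : OffTri i j k p q := by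
  simp only [Set.mem_insert_iff, Set.mem_singleton_iff] at h
  unfold OffTri
  tauto

theorem triangle_rotate (i j k : Fin n) : ({j, k, i} : Set (Fin n)) = {i, j, k} := by
  ext
  simp only [Set.mem_insert_iff, Set.mem_singleton_iff]
  tauto

theorem connectedNoMulti_iff_of_agree_offTri {G G' : OGraph n} {i j k : Fin n}
    {c₁ c₂ : Col} (hG : Tri G i j k c₁ c₂) (hG' : ConnectedNoMultiOn G' {i, j, k})
    (hagree : ∀ p q, OffTri i j k p q → G'.dir p q = G.dir p q) :
    ConnectedNoMulti G' ↔ ConnectedNoMulti G :=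
  connectedNoMulti_iff_of_agree_off hG.connectedNoMultiOn hG' fun p q hpq =>
    hagree p q (offTri_of_not_mem hpq)

end Graphs

theorem exists_connectedNoMulti_iff_of_mem_symOSet {n : ℕ} {x : Gamma R n}
    (hx : x ∈ symOSet R n) : ∃ Q : Prop, ∀ H ∈ x.support, ConnectedNoMulti H ↔ Q := by
  obtain ⟨G₁, G₂, i, j, c, h1, h2, h3, h4, hoff, rfl⟩ := hx
  refine ⟨ConnectedNoMulti G₁, forall_mem_support_add (forall_mem_support_single _ Iff.rfl)
    (forall_mem_support_single _ ?_)⟩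
  refine connectedNoMulti_iff_of_agree_off (connectedNoMultiOn_pair h1 h2) ?_ fun p q hpq => ?_
  · rw [Set.pair_comm]
    exact connectedNoMultiOn_pair h4 h3
  · simp only [Set.mem_insert_iff, Set.mem_singleton_iff] at hpq
    exact hoff p q (by tauto)

theorem exists_connectedNoMulti_iff_of_mem_jacOSet {n : ℕ} {x : Gamma R n}
    (hx : x ∈ jacOSet R n) : ∃ Q : Prop, ∀ H ∈ x.support, ConnectedNoMulti H ↔ Q := by
  obtain ⟨G₁, G₂, G₃, i, j, k, c, -, -, -, T1, T2, T3, hoff, rfl⟩ := hx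
  refine ⟨ConnectedNoMulti G₁, ?_⟩
  repeat' refine forall_mem_support_add ?_ ?_
  all_goals refine forall_mem_support_single _ ?_
  · rfl
  · refine connectedNoMulti_iff_of_agree_offTri T1 ?_ fun p q hpq => (hoff p q hpq).1
    rw [← triangle_rotate]
    exact T2.connectedNoMultiOn
  · refine connectedNoMulti_iff_of_agree_offTri T1 ?_ fun p q hpq => (hoff p q hpq).2
    rw [← triangle_rotate, ← triangle_rotate]
    exact T3.connectedNoMultiOn

theorem exists_connectedNoMulti_iff_of_mem_mixOSet {n : ℕ} {x : Gamma R n}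
    (hx : x ∈ mixOSet R n) : ∃ Q : Prop, ∀ H ∈ x.support, ConnectedNoMulti H ↔ Q := by
  obtain ⟨G₁, G₂, G₃, G₄, G₅, G₆, i, j, k, -, -, -, T1, T2, T3, T4, T5, T6, hoff, rfl⟩ := hx
  refine ⟨ConnectedNoMulti G₁, ?_⟩
  repeat' refine forall_mem_support_add ?_ ?_
  all_goals refine forall_mem_support_single _ ?_
  · rfl
  · refine connectedNoMulti_iff_of_agree_offTri T1 ?_ fun p q hpq => (hoff p q hpq).1
    rw [← triangle_rotate]
    exact T2.connectedNoMultiOn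
  · refine connectedNoMulti_iff_of_agree_offTri T1 ?_ fun p q hpq => (hoff p q hpq).2.1
    rw [← triangle_rotate, ← triangle_rotate]
    exact T3.connectedNoMultiOn
  · exact connectedNoMulti_iff_of_agree_offTri T1 T4.connectedNoMultiOn
      fun p q hpq => (hoff p q hpq).2.2.1
  · refine connectedNoMulti_iff_of_agree_offTri T1 ?_ fun p q hpq => (hoff p q hpq).2.2.2.1
    rw [← triangle_rotate]
    exact T5.connectedNoMultiOn
  · refine connectedNoMulti_iff_of_agree_offTri T1 ?_ fun p q hpq => (hoff p q hpq).2.2.2.2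
    rw [← triangle_rotate, ← triangle_rotate]
    exact T6.connectedNoMultiOn

theorem filter_connectedNoMulti_mem_span {n : ℕ} {x : Gamma R n} (hx : x ∈ In R n) :
    x.filter ConnectedNoMulti ∈ Submodule.span R (symOSet R n ∪ jacOSet R n ∪ mixOSet R n) := by
  refine filter_mem_span_of_mem_span hx ?_
  rintro g ((((⟨H, hH, rfl⟩ | ⟨H, ⟨i, j, hij, hji⟩, rfl⟩) | hg) | hg) | hg)
  · rw [Finsupp.filter_single_of_neg _ fun h => hH h.1]
    exact zero_mem _
  · rw [Finsupp.filter_single_of_neg _ fun h => (h.2 i j).elim hij hji]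
    exact zero_mem _
  · exact filter_mem_of_forall_mem_support_iff (Submodule.subset_span (Or.inl (Or.inl hg)))
      (exists_connectedNoMulti_iff_of_mem_symOSet R hg)
  · exact filter_mem_of_forall_mem_support_iff (Submodule.subset_span (Or.inl (Or.inr hg)))
      (exists_connectedNoMulti_iff_of_mem_jacOSet R hg)
  · exact filter_mem_of_forall_mem_support_iff (Submodule.subset_span (Or.inr hg))
      (exists_connectedNoMulti_iff_of_mem_mixOSet R hg)

theorem stmt18 (n m : ℕ) (a : Fin m → R) (G : Fin m → OGraph n)
    (hG : ∀ j, IsOTree (G j))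
    (h : (∑ j, Finsupp.single (G j) (a j)) ∈ In R n) :
    (∑ j, Finsupp.single (G j) (a j)) ∈
      Submodule.span R (symOSet R n ∪ jacOSet R n ∪ mixOSet R n) := by
  have htrees : ∀ H ∈ (∑ j, Finsupp.single (G j) (a j)).support, ConnectedNoMulti H := by
    intro H hH
    obtain ⟨j, -, hj⟩ := Finset.mem_biUnion.1 (Finsupp.support_finsetSum hH)
    rw [Finset.mem_singleton.1 (Finsupp.support_single_subset hj)]
    exact ⟨(hG j).1.connected, (hG j).2⟩
  rw [← (Finsupp.filter_eq_self_iff _ _).2 fun H hH => htrees H (Finsupp.mem_support_iff.2 hH)]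
  exact filter_connectedNoMulti_mem_span R h

end LiuPaper
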